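/- (Theorem 18 of the paper) If P₁ and P₂ are dense sets of infinite binary strings (dense subsets of the Cantor space 2^ω) and φ is a propositional L_{ω1ω}-formula such that every t ∈ P₁ satisfies φ and no t ∈ P₂ satisfies φ, then s(φ) ≥ ω². -/

import Mathlib

/-- Propositional `L_{ω₁ω}`-formulas over propositional symbols `p i`, `i : ℕ`,
in negation normal form. -/
inductive PFml : Type
  | pos : ℕ → PFml
  | neg : ℕ → PFml
  | and : PFml → PFml → PFml
  | or : PFml → PFml → PFml
  | iand : (ℕ → PFml) → PFml
  | ior : (ℕ → PFml) → PFml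

/-- Satisfaction of a propositional formula by an infinite binary string. -/
def PSat (t : ℕ → Bool) : PFml → Prop
  | .pos i => t i = true
  | .neg i => t i = false
  | .and φ ψ => PSat t φ ∧ PSat t ψ
  | .or φ ψ => PSat t φ ∨ PSat t ψ
  | .iand f => ∀ i : ℕ, PSat t (f i)
  | .ior f => ∃ i : ℕ, PSat t (f i)

universe u

/-- The natural (Hessenberg) sum of ordinals, as `Ordinal.nadd` was defined in Mathlib
(it has since been removed from Mathlib). -/
noncomputable def Ordinal.nadd (a b : Ordinal.{u}) : Ordinal.{u} :=
  max (⨆ x : Set.Iio a, Order.succ (Ordinal.nadd x.1 b))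
    (⨆ x : Set.Iio b, Order.succ (Ordinal.nadd a x.1))
termination_by (a, b)
decreasing_by
  · exact Prod.Lex.left _ _ x.2
  · exact Prod.Lex.right _ x.2

/-- Finite partial natural (Hessenberg) sums. -/
noncomputable def natSumPrefix (γ : ℕ → Ordinal) : ℕ → Ordinal
  | 0 => 0
  | n + 1 => Ordinal.nadd (natSumPrefix γ n) (γ n)

/-- The infinite natural sum. -/
noncomputable def inatSum (γ : ℕ → Ordinal) : Ordinal := ⨆ n : ℕ, natSumPrefix γ n


noncomputable def psize : PFml → Ordinal
  | .pos _ => 1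
  | .neg _ => 1
  | .and φ ψ => Ordinal.nadd (psize φ) (psize ψ)
  | .or φ ψ => Ordinal.nadd (psize φ) (psize ψ)
  | .iand f => inatSum fun i => psize (f i)
  | .ior f => inatSum fun i => psize (f i)


/-!
The set of strings satisfying a formula of size `< ω²` has a nowhere dense frontier. Literals
define clopen sets, and so does every formula of size `< ω`, since it uses no infinite
connective. Nowhere dense frontiers survive finite unions and intersections, and in a countable
conjunction or disjunction of size `< ω²` only finitely many members have size `≥ ω`: the others
define clopen sets, whose countable intersection (union) is closed (open). If a formula separates
two dense sets, however, both its models and its countermodels are dense, so its frontier is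
the whole Cantor space.
-/

open Ordinal Set

infixl:65 " ♯ " => Ordinal.nadd

namespace Ordinal

variable {a b c d : Ordinal.{u}}

theorem nadd_lt_nadd_right (h : a < b) (c : Ordinal.{u}) : a ♯ c < b ♯ c := by
  rw [nadd.eq_1 b c]
  exact (Order.lt_succ _).trans_le <| le_max_of_le_left <|
    le_ciSup (f := fun x : Iio b => Order.succ (x.1 ♯ c)) bddAbove_of_small ⟨a, h⟩

theorem nadd_lt_nadd_left (h : b < c) (a : Ordinal.{u}) : a ♯ b < a ♯ c := by
  rw [nadd.eq_1 a c]
  exact (Order.lt_succ _).trans_le <| le_max_of_le_right <|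
    le_ciSup (f := fun x : Iio c => Order.succ (a ♯ x.1)) bddAbove_of_small ⟨b, h⟩

theorem nadd_le_nadd_right (h : a ≤ b) (c : Ordinal.{u}) : a ♯ c ≤ b ♯ c :=
  (StrictMono.monotone fun _ _ h => nadd_lt_nadd_right h c) h

theorem nadd_le_nadd_left (h : b ≤ c) (a : Ordinal.{u}) : a ♯ b ≤ a ♯ c :=
  (StrictMono.monotone fun _ _ h => nadd_lt_nadd_left h a) h

theorem nadd_le_nadd (h₁ : a ≤ b) (h₂ : c ≤ d) : a ♯ c ≤ b ♯ d :=
  (nadd_le_nadd_left h₂ a).trans (nadd_le_nadd_right h₁ d)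

theorem le_self_nadd : a ≤ a ♯ b :=
  StrictMono.le_apply fun _ _ h => nadd_lt_nadd_right h b

theorem le_nadd_self : b ≤ a ♯ b :=
  StrictMono.le_apply fun _ _ h => nadd_lt_nadd_left h a

theorem add_le_nadd (a b : Ordinal.{u}) : a + b ≤ a ♯ b := by
  induction b using WellFoundedLT.induction with
  | _ b ih =>
    rcases eq_or_ne b 0 with rfl | hb
    · simpa using le_self_nadd
    · refine le_of_forall_lt fun c hc => ?_
      obtain ⟨d, hd, hcd⟩ := (lt_add_iff hb).1 hc
      exact hcd.trans_lt ((ih d hd).trans_lt (nadd_lt_nadd_left hd a))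

end Ordinal

section NaturalSum

variable (γ : ℕ → Ordinal)

theorem natSumPrefix_mono : Monotone (natSumPrefix γ) :=
  monotone_nat_of_le_succ fun _ => le_self_nadd

theorem natSumPrefix_le_inatSum (n : ℕ) : natSumPrefix γ n ≤ inatSum γ :=
  Ordinal.le_iSup (fun n => natSumPrefix γ n) n

theorem le_inatSum (i : ℕ) : γ i ≤ inatSum γ :=
  le_nadd_self.trans (natSumPrefix_le_inatSum γ (i + 1))

variable {γ}

theorem mul_omega0_le_inatSum {c : Ordinal} (h : {i | c ≤ γ i}.Infinite) :
    c * ω ≤ inatSum γ := by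
  rw [mul_le_iff_of_isSuccLimit isSuccLimit_omega0]
  intro b hb
  obtain ⟨m, rfl⟩ := lt_omega0.1 hb
  suffices ∃ N, c * m ≤ natSumPrefix γ N from
    let ⟨N, hN⟩ := this
    hN.trans (natSumPrefix_le_inatSum γ N)
  clear hb
  induction m with
  | zero => exact ⟨0, by simp⟩
  | succ m ih =>
    obtain ⟨N, hN⟩ := ih
    obtain ⟨i, hci, hNi⟩ := h.exists_gt N
    refine ⟨i + 1, ?_⟩
    calc c * ((m + 1 : ℕ) : Ordinal) = c * m + c := by rw [Nat.cast_succ, mul_add_one]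
      _ ≤ c * m ♯ c := add_le_nadd _ _
      _ ≤ natSumPrefix γ N ♯ γ i := nadd_le_nadd hN hci
      _ ≤ natSumPrefix γ i ♯ γ i := nadd_le_nadd_right (natSumPrefix_mono γ hNi.le) _

end NaturalSum

section NowhereDenseFrontier

variable {X : Type*} [TopologicalSpace X] {s t : Set X}

theorem IsNowhereDense.union (hs : IsNowhereDense s) (ht : IsNowhereDense t) :
    IsNowhereDense (s ∪ t) := by
  rw [IsNowhereDense, closure_union,
    interior_union_isClosed_of_interior_empty isClosed_closure ht]
  exact hs

theorem IsClosed.isNowhereDense_frontier (hs : IsClosed s) : IsNowhereDense (frontier s) :=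
  isClosed_frontier.isNowhereDense_iff.2 (interior_frontier hs)

theorem isNowhereDense_frontier_inter (hs : IsNowhereDense (frontier s))
    (ht : IsNowhereDense (frontier t)) : IsNowhereDense (frontier (s ∩ t)) :=
  (hs.union ht).mono <|
    (frontier_inter_subset s t).trans (union_subset_union inter_subset_left inter_subset_right)

theorem isNowhereDense_frontier_union (hs : IsNowhereDense (frontier s))
    (ht : IsNowhereDense (frontier t)) : IsNowhereDense (frontier (s ∪ t)) := by
  rw [← frontier_compl, compl_union]
  exact isNowhereDense_frontier_inter (by rwa [frontier_compl]) (by rwa [frontier_compl])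

theorem Set.Finite.isNowhereDense_frontier_biInter {ι : Type*} {F : Set ι} (hF : F.Finite)
    {s : ι → Set X} (h : ∀ i ∈ F, IsNowhereDense (frontier (s i))) :
    IsNowhereDense (frontier (⋂ i ∈ F, s i)) := by
  induction F, hF using Set.Finite.induction_on with
  | empty => simp
  | insert _ _ ih =>
    rw [biInter_insert]
    exact isNowhereDense_frontier_inter (h _ (mem_insert _ _))
      (ih fun i hi => h i (mem_insert_of_mem _ hi))

theorem isNowhereDense_frontier_iInter {ι : Type*} {F : Set ι} (hF : F.Finite)
    {s : ι → Set X} (hclosed : ∀ i ∉ F, IsClosed (s i))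
    (h : ∀ i ∈ F, IsNowhereDense (frontier (s i))) :
    IsNowhereDense (frontier (⋂ i, s i)) := by
  have hsplit : ⋂ i, s i = (⋂ i ∈ Fᶜ, s i) ∩ ⋂ i ∈ F, s i := by
    rw [← biInter_union, compl_union_self, biInter_univ]
  rw [hsplit]
  exact isNowhereDense_frontier_inter (isClosed_biInter hclosed).isNowhereDense_frontier
    (hF.isNowhereDense_frontier_biInter h)

theorem isNowhereDense_frontier_iUnion {ι : Type*} {F : Set ι} (hF : F.Finite)
    {s : ι → Set X} (hopen : ∀ i ∉ F, IsOpen (s i))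
    (h : ∀ i ∈ F, IsNowhereDense (frontier (s i))) :
    IsNowhereDense (frontier (⋃ i, s i)) := by
  rw [← frontier_compl, compl_iUnion]
  exact isNowhereDense_frontier_iInter hF (fun i hi => (hopen i hi).isClosed_compl)
    fun i hi => by rw [frontier_compl]; exact h i hi

end NowhereDenseFrontier

theorem one_le_psize (φ : PFml) : 1 ≤ psize φ := by
  induction φ with
  | pos | neg => exact le_rfl
  | and _ _ ih _ | or _ _ ih _ => exact ih.trans le_self_nadd
  | iand f ih | ior f ih => exact (ih 0).trans (le_inatSum _ 0)

theorem omega0_le_inatSum_psize (f : ℕ → PFml) : ω ≤ inatSum fun i => psize (f i) := by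
  simpa using mul_omega0_le_inatSum (γ := fun i => psize (f i)) (c := 1)
    (by simpa [one_le_psize] using infinite_univ)

theorem finite_setOf_omega0_le_psize {f : ℕ → PFml}
    (hf : inatSum (fun i => psize.{u} (f i)) < ω * ω) : {i | ω ≤ psize.{u} (f i)}.Finite :=
  not_infinite.1 fun h => (mul_omega0_le_inatSum h).not_gt hf

theorem isClopen_setOf_psat_of_psize_lt_omega0 {φ : PFml} (hφ : psize φ < ω) :
    IsClopen {t | PSat t φ} := by
  induction φ with
  | pos i => exact (isClopen_discrete {true}).preimage (continuous_apply i)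
  | neg i => exact (isClopen_discrete {false}).preimage (continuous_apply i)
  | and φ ψ ihφ ihψ =>
    exact (ihφ (le_self_nadd.trans_lt hφ)).inter (ihψ (le_nadd_self.trans_lt hφ))
  | or φ ψ ihφ ihψ =>
    exact (ihφ (le_self_nadd.trans_lt hφ)).union (ihψ (le_nadd_self.trans_lt hφ))
  | iand f _ | ior f _ => exact absurd hφ (omega0_le_inatSum_psize f).not_gt

theorem setOf_psat_iand (f : ℕ → PFml) : {t | PSat t (.iand f)} = ⋂ i, {t | PSat t (f i)} := by
  ext; simp [PSat]

theorem setOf_psat_ior (f : ℕ → PFml) : {t | PSat t (.ior f)} = ⋃ i, {t | PSat t (f i)} := by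
  ext; simp [PSat]

theorem isNowhereDense_frontier_setOf_psat {φ : PFml} (hφ : psize φ < ω * ω) :
    IsNowhereDense (frontier {t | PSat t φ}) := by
  induction φ with
  | pos i => exact (isClosed_singleton.preimage (continuous_apply i)).isNowhereDense_frontier
  | neg i => exact (isClosed_singleton.preimage (continuous_apply i)).isNowhereDense_frontier
  | and φ ψ ihφ ihψ =>
    exact isNowhereDense_frontier_inter (ihφ (le_self_nadd.trans_lt hφ))
      (ihψ (le_nadd_self.trans_lt hφ))
  | or φ ψ ihφ ihψ =>
    exact isNowhereDense_frontier_union (ihφ (le_self_nadd.trans_lt hφ))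
      (ihψ (le_nadd_self.trans_lt hφ))
  | iand f ih =>
    rw [setOf_psat_iand]
    exact isNowhereDense_frontier_iInter (finite_setOf_omega0_le_psize hφ)
      (fun i hi => (isClopen_setOf_psat_of_psize_lt_omega0 (not_le.1 hi)).isClosed)
      fun i _ => ih i ((le_inatSum _ i).trans_lt hφ)
  | ior f ih =>
    rw [setOf_psat_ior]
    exact isNowhereDense_frontier_iUnion (finite_setOf_omega0_le_psize hφ)
      (fun i hi => (isClopen_setOf_psat_of_psize_lt_omega0 (not_le.1 hi)).isOpen)
      fun i _ => ih i ((le_inatSum _ i).trans_lt hφ)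

/-- Any propositional `L_{ω₁ω}`-formula separating two dense sets of infinite
binary strings has size at least `ω²`. -/
theorem omega_sq_le_psize_of_separates_dense (P₁ P₂ : Set (ℕ → Bool))
    (h₁ : Dense P₁) (h₂ : Dense P₂) (φ : PFml)
    (hsep₁ : ∀ t ∈ P₁, PSat t φ) (hsep₂ : ∀ t ∈ P₂, ¬ PSat t φ) :
    Ordinal.omega0 * Ordinal.omega0 ≤ psize φ := by
  by_contra! hφ
  have hP₁ : Dense {t | PSat t φ} := h₁.mono hsep₁
  have hP₂ : Dense {t | PSat t φ}ᶜ := h₂.mono hsep₂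
  have hfrontier : frontier {t | PSat t φ} = Set.univ := by
    rw [frontier_eq_closure_inter_closure, hP₁.closure_eq, hP₂.closure_eq, univ_inter]
  have hnd := isNowhereDense_frontier_setOf_psat hφ
  rw [hfrontier, IsNowhereDense, closure_univ, interior_univ] at hnd
  exact univ_nonempty.ne_empty hnd
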